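/- arXiv:1708.06955 — 9 statements merged into one kernel-verified Lean document; each statement's English description precedes it below -/
import Mathlib

section
/- Let A, S, S̄ be finite sets with |S| = |S̄|, and let f: A → A, f̄: S → S̄, λ: A → S, λ̄: A → S̄ be maps such that λ̄ ∘ f = f̄ ∘ λ. If both λ and λ̄ are surjective, then f is a bijection if and only if f̄ is a bijection from S to S̄ and f is injective on λ⁻¹(s) for each s ∈ S. -/
/-- AGW criterion. -/
theorem agw_criterion {A S Sb : Type*} [Fintype A] [Fintype S] [Fintype Sb]
    (hcard : Fintype.card S = Fintype.card Sb)
    (f : A → A) (fb : S → Sb) (lam : A → S) (lamb : A → Sb)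
    (hcomm : lamb ∘ f = fb ∘ lam)
    (hlam : Function.Surjective lam) (hlamb : Function.Surjective lamb) :
    Function.Bijective f ↔
      (Function.Bijective fb ∧ ∀ s : S, Set.InjOn f (lam ⁻¹' {s})) := by
  have key : ∀ a, lamb (f a) = fb (lam a) := fun a => congrFun hcomm a
  constructor
  · intro hf
    refine ⟨(Fintype.bijective_iff_surjective_and_card fb).2 ⟨?_, hcard⟩,
      fun s => hf.injective.injOn⟩
    intro sb
    obtain ⟨a, ha⟩ := hlamb sb
    obtain ⟨a', ha'⟩ := hf.surjective a
    exact ⟨lam a', by rw [← key, ha', ha]⟩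
  · rintro ⟨hfb, hinj⟩
    refine Finite.injective_iff_bijective.1 ?_
    intro a a' h
    have hs : lam a = lam a' := hfb.injective (by rw [← key, ← key, h])
    exact hinj (lam a') hs rfl h
end

section
/- Let q be a prime power and q - 1 = ℓs for positive integers ℓ, s. Let f ∈ F_q[x] and r a positive integer. Then P(x) = x^r · f(x^s) is a permutation polynomial of F_q if and only if gcd(r, s) = 1 and the map x ↦ x^r · f(x)^s permutes the set μ_ℓ of ℓ-th roots of unity in F_q. -/
/-!
The unit group of `F` is cyclic of order `ℓ * s`, so `x ↦ x ^ s` maps `Fˣ` onto `μ_ℓ`, and with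
`P x = x ^ r * f (x ^ s)`, `g x = x ^ r * f x ^ s` we have `g (x ^ s) = P x ^ s`. As `P 0 = 0`, the
map `P` permutes `F` iff it permutes `Fˣ`, which happens iff `g` permutes `μ_ℓ` and `P` is injective
on each fibre `{a ^ s = c}`. On a fibre `P a = P b` means `a ^ r = b ^ r`, so injectivity there is
`gcd(r, s) = 1`: an element of prime order dividing both `r` and `s` has the same image as `1`.
-/

open Polynomial Function Set

theorem IsCyclic.range_powMonoidHom_eq_ker {G : Type*} [CommGroup G] [IsCyclic G] [Finite G]
    {ℓ s : ℕ} (hcard : Nat.card G = ℓ * s) :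
    (powMonoidHom s : G →* G).range = (powMonoidHom ℓ).ker := by
  have hs : s ≠ 0 := right_ne_zero_of_mul (hcard ▸ Nat.card_pos.ne')
  refine Subgroup.eq_of_le_of_card_ge ?_ ?_
  · rintro _ ⟨v, rfl⟩
    rw [MonoidHom.mem_ker, powMonoidHom_apply, powMonoidHom_apply, ← pow_mul', ← hcard,
      pow_card_eq_one']
  · rw [IsCyclic.card_powMonoidHom_ker, IsCyclic.card_powMonoidHom_range, hcard,
      Nat.gcd_mul_right_left, Nat.gcd_mul_left_left, Nat.mul_div_cancel _ (Nat.pos_of_ne_zero hs)]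

namespace FiniteField

variable {F : Type*} [Field F] [Fintype F] {ℓ s : ℕ}

theorem exists_pow_eq_iff_pow_eq_one (hls : ℓ * s = Fintype.card F - 1) {x : F} :
    (∃ y ≠ 0, y ^ s = x) ↔ x ^ ℓ = 1 := by
  have hcard : Nat.card Fˣ = ℓ * s := by
    rw [Nat.card_units, Nat.card_eq_fintype_card, hls]
  constructor
  · rintro ⟨y, hy, rfl⟩
    rw [← pow_mul', hls, pow_card_sub_one_eq_one y hy]
  · intro hx
    have hℓ : ℓ ≠ 0 := left_ne_zero_of_mul (hcard ▸ Nat.card_pos.ne')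
    obtain ⟨u, rfl⟩ := IsUnit.of_pow_eq_one hx hℓ
    have hu : u ∈ (powMonoidHom ℓ : Fˣ →* Fˣ).ker := by
      rw [MonoidHom.mem_ker, powMonoidHom_apply, ← Units.val_inj, Units.val_pow_eq_pow_val, hx,
        Units.val_one]
    obtain ⟨v, rfl⟩ := (IsCyclic.range_powMonoidHom_eq_ker hcard).ge hu
    exact ⟨v, v.ne_zero, rfl⟩

end FiniteField

theorem eq_of_pow_eq_of_pow_eq_of_coprime {K : Type*} [CommGroupWithZero K] {a b : K} {r s : ℕ}
    (hb : b ≠ 0) (hrs : r.Coprime s) (har : a ^ r = b ^ r) (has : a ^ s = b ^ s) : a = b := by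
  have hdiv : ∀ n, a ^ n = b ^ n → (a / b) ^ n = 1 := fun n h => by
    rw [div_pow, h, div_self (pow_ne_zero n hb)]
  have h := pow_gcd_eq_one.mpr ⟨hdiv r har, hdiv s has⟩
  rwa [hrs.gcd_eq_one, pow_one, div_eq_one_iff_eq hb] at h

theorem pow_pow_mul_eval_pow_eq {R : Type*} [CommSemiring R] (f : R[X]) (r s : ℕ) (x : R) :
    (x ^ s) ^ r * f.eval (x ^ s) ^ s = (x ^ r * f.eval (x ^ s)) ^ s := by
  rw [mul_pow, pow_right_comm]

section PowMulEvalPow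

variable {F : Type*} [Field F] [Fintype F] {ℓ s r : ℕ} {f : F[X]}

theorem coprime_of_injective_pow_mul_eval_pow (hs : s ∣ Fintype.card F - 1)
    (hP : Injective fun x : F => x ^ r * f.eval (x ^ s)) : r.Coprime s := by
  refine Nat.coprime_of_dvd fun p hp hpr hps => ?_
  have : Fact p.Prime := ⟨hp⟩
  have hpcard : p ∣ Nat.card Fˣ := by
    rw [Nat.card_units, Nat.card_eq_fintype_card]
    exact hps.trans hs
  obtain ⟨t, ht⟩ := exists_prime_orderOf_dvd_card' p hpcard
  have hpow : ∀ n, p ∣ n → (t : F) ^ n = 1 := fun n hn => by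
    rw [← Units.val_pow_eq_pow_val, orderOf_dvd_iff_pow_eq_one.mp (ht ▸ hn), Units.val_one]
  have ht1 : (t : F) = 1 := hP (by simp only [hpow r hpr, hpow s hps, one_pow])
  exact hp.one_lt.ne (by rw [← ht, Units.val_eq_one.mp ht1, orderOf_one])

theorem bijOn_of_bijective_pow_mul_eval_pow (hr : r ≠ 0) (hls : ℓ * s = Fintype.card F - 1)
    (hP : Bijective fun x : F => x ^ r * f.eval (x ^ s)) :
    BijOn (fun x : F => x ^ r * f.eval x ^ s) {x | x ^ ℓ = 1} {x | x ^ ℓ = 1} := by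
  set P := fun x : F => x ^ r * f.eval (x ^ s)
  have hP0 : P 0 = 0 := by simp [P, hr]
  have hmem {x : F} (hx : x ≠ 0) : (x ^ s) ^ ℓ = 1 :=
    (FiniteField.exists_pow_eq_iff_pow_eq_one hls).mp ⟨x, hx, rfl⟩
  refine ((toFinite _).surjOn_iff_bijOn_of_mapsTo ?_).mp ?_
  · intro u hu
    obtain ⟨x, hx, rfl⟩ := (FiniteField.exists_pow_eq_iff_pow_eq_one hls).mpr hu
    have hPx : P x ≠ 0 := fun h => hx (hP.injective (h.trans hP0.symm))
    simp only [mem_ofPred_eq, pow_pow_mul_eval_pow_eq]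
    exact hmem hPx
  · intro w hw
    obtain ⟨z, hz, rfl⟩ := (FiniteField.exists_pow_eq_iff_pow_eq_one hls).mpr hw
    obtain ⟨x, rfl⟩ := hP.surjective z
    have hx : x ≠ 0 := by rintro rfl; exact hz hP0
    exact ⟨x ^ s, hmem hx, pow_pow_mul_eval_pow_eq f r s x⟩

theorem injective_of_bijOn_pow_mul_eval_pow (hr : r ≠ 0) (hls : ℓ * s = Fintype.card F - 1)
    (hrs : r.Coprime s)
    (hg : BijOn (fun x : F => x ^ r * f.eval x ^ s) {x | x ^ ℓ = 1} {x | x ^ ℓ = 1}) :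
    Injective fun x : F => x ^ r * f.eval (x ^ s) := by
  have hℓs : ℓ * s ≠ 0 := hls ▸ (Nat.sub_pos_of_lt Fintype.one_lt_card).ne'
  have hmem {x : F} (hx : x ≠ 0) : (x ^ s) ^ ℓ = 1 :=
    (FiniteField.exists_pow_eq_iff_pow_eq_one hls).mp ⟨x, hx, rfl⟩
  have hP {x : F} : x ^ r * f.eval (x ^ s) = 0 ↔ x = 0 := by
    refine ⟨fun h => by_contra fun hx => ?_, by rintro rfl; simp [hr]⟩
    have := hg.mapsTo (hmem hx)
    rw [mem_ofPred_eq, pow_pow_mul_eval_pow_eq, h, ← pow_mul', zero_pow hℓs] at this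
    exact zero_ne_one this
  intro a b (hab : a ^ r * f.eval (a ^ s) = b ^ r * f.eval (b ^ s))
  rcases eq_or_ne b 0 with rfl | hb
  · simpa [hr, hP] using hab
  have ha : a ≠ 0 := by rwa [Ne, ← hP, hab, hP]
  have has : a ^ s = b ^ s := hg.injOn (hmem ha) (hmem hb) <| by
    simp only [pow_pow_mul_eval_pow_eq, hab]
  have har : a ^ r = b ^ r := by
    refine mul_right_cancel₀ (right_ne_zero_of_mul (hP.not.mpr hb)) ?_
    rwa [has] at hab
  exact eq_of_pow_eq_of_pow_eq_of_coprime hb hrs har has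

end PowMulEvalPow

theorem pp_criterion_cyclotomic_general {F : Type*} [Field F] [Fintype F]
    (q ℓ s r : ℕ) (hq : Fintype.card F = q)
    (hr : 0 < r) (hls : ℓ * s = q - 1)
    (f : Polynomial F) :
    Function.Bijective (fun x : F => x ^ r * f.eval (x ^ s)) ↔
      (Nat.gcd r s = 1 ∧
        Set.BijOn (fun x : F => x ^ r * (f.eval x) ^ s)
          {x : F | x ^ ℓ = 1} {x : F | x ^ ℓ = 1}) := by
  subst hq
  refine ⟨fun hP => ⟨?_, bijOn_of_bijective_pow_mul_eval_pow hr.ne' hls hP⟩,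
    fun ⟨hrs, hg⟩ => ?_⟩
  · exact coprime_of_injective_pow_mul_eval_pow (Dvd.intro_left ℓ hls) hP.injective
  · exact Finite.injective_iff_bijective.mp (injective_of_bijOn_pow_mul_eval_pow hr.ne' hls hrs hg)

/-- Park–Lee / Wang / Zieve criterion. -/
theorem pp_criterion_cyclotomic {F : Type*} [Field F] [Fintype F]
    (q ℓ s r : ℕ) (hq : Fintype.card F = q)
    (hℓ : 0 < ℓ) (hs : 0 < s) (hr : 0 < r) (hls : ℓ * s = q - 1)
    (f : Polynomial F) :
    Function.Bijective (fun x : F => x ^ r * f.eval (x ^ s)) ↔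
      (Nat.gcd r s = 1 ∧
        Set.BijOn (fun x : F => x ^ r * (f.eval x) ^ s)
          {x : F | x ^ ℓ = 1} {x : F | x ^ ℓ = 1}) :=
  pp_criterion_cyclotomic_general q ℓ s r hq hr hls f
end

section
/- Let q - 1 = ℓs and let ζ be a primitive ℓ-th root of unity in F_q. Assume f(ζ^i)^s = 1 for all i = 0, ..., ℓ-1. Then P(x) = x^r · f(x^s) is a permutation polynomial of F_q if and only if gcd(r, q-1) = 1. -/
/-- Akbary–Wang special case: if f(ζ^i)^s = 1 for all i, then x^r f(x^s) is a PP
iff gcd(r, q-1) = 1. -/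
theorem pp_criterion_power {F : Type*} [Field F] [Fintype F]
    (q ℓ s r : ℕ) (hq : Fintype.card F = q)
    (hℓ : 0 < ℓ) (hs : 0 < s) (hr : 0 < r) (hls : ℓ * s = q - 1)
    (f : Polynomial F) (ζ : F) (hζ : orderOf ζ = ℓ)
    (hf : ∀ i < ℓ, (f.eval (ζ ^ i)) ^ s = 1) :
    Function.Bijective (fun x : F => x ^ r * f.eval (x ^ s)) ↔
      Nat.gcd r (q - 1) = 1 := by
  haveI := Classical.decEq F
  have hq1 : ∀ x : F, x ≠ 0 → x ^ (q - 1) = 1 := by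
    intro x hx
    rw [← hq]
    exact FiniteField.pow_card_sub_one_eq_one x hx
  -- key: for x ≠ 0, f(x^s)^s = 1
  have hprim : IsPrimitiveRoot ζ ℓ := hζ ▸ IsPrimitiveRoot.orderOf ζ
  haveI : NeZero ℓ := ⟨hℓ.ne'⟩
  have hA : ∀ x : F, x ≠ 0 → (f.eval (x ^ s)) ^ s = 1 := by
    intro x hx
    have h1 : (x ^ s) ^ ℓ = 1 := by
      rw [← pow_mul, mul_comm s ℓ, hls]; exact hq1 x hx
    obtain ⟨i, hi, hpow⟩ := hprim.eq_pow_of_pow_eq_one h1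
    rw [← hpow]; exact hf i hi
  have hAne : ∀ x : F, x ≠ 0 → f.eval (x ^ s) ≠ 0 := by
    intro x hx h0
    have := hA x hx
    rw [h0, zero_pow hs.ne'] at this
    exact zero_ne_one this
  have hgcd1 : ∀ (z : F) (a b : ℕ), z ^ a = 1 → z ^ b = 1 → z ^ Nat.gcd a b = 1 := by
    intro z a b ha hb
    exact orderOf_dvd_iff_pow_eq_one.mp
      (Nat.dvd_gcd (orderOf_dvd_of_pow_eq_one ha) (orderOf_dvd_of_pow_eq_one hb))
  constructor
  · -- bijective → gcd = 1
    intro hbij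
    by_contra hne
    obtain ⟨p, hp, hpd⟩ := Nat.exists_prime_and_dvd hne
    haveI : Fact p.Prime := ⟨hp⟩
    have hpr : p ∣ r := hpd.trans (Nat.gcd_dvd_left _ _)
    have hpq : p ∣ q - 1 := hpd.trans (Nat.gcd_dvd_right _ _)
    -- Step A: p ∣ s
    have hps : p ∣ s := by
      obtain ⟨γ, hγgen⟩ := IsCyclic.exists_generator (α := Fˣ)
      have hγord : orderOf γ = q - 1 := by
        rw [orderOf_eq_card_of_forall_mem_zpowers hγgen, Nat.card_eq_fintype_card,
          Fintype.card_units, hq]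
      obtain ⟨x, hx⟩ := hbij.2 (↑γ : F)
      simp only at hx
      have hx0 : x ≠ 0 := by
        rintro rfl
        rw [zero_pow hr.ne', zero_mul] at hx
        exact γ.ne_zero hx.symm
      obtain ⟨r', hr'⟩ := hpr
      obtain ⟨t, ht⟩ := hpq
      have ht0 : 0 < t := by
        rcases Nat.eq_zero_or_pos t with h | h
        · exfalso
          have : q - 1 = 0 := by rw [ht, h, mul_zero]
          rw [this] at hls
          exact absurd hls (Nat.mul_ne_zero hℓ.ne' hs.ne')
        · exact h
      have hγpow : (↑γ : F) ^ (s * t) = 1 := by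
        rw [← hx, mul_pow, ← pow_mul]
        have he : r * (s * t) = (q - 1) * (r' * s) := by rw [hr', ht]; ring
        rw [he, pow_mul, hq1 x hx0, one_pow, one_mul, pow_mul, hA x hx0, one_pow]
      have hdvd : q - 1 ∣ s * t := by
        have : orderOf (↑γ : F) ∣ s * t := orderOf_dvd_of_pow_eq_one hγpow
        rwa [orderOf_units, hγord] at this
      rw [ht] at hdvd
      exact (Nat.mul_dvd_mul_iff_right ht0).mp hdvd
    -- Step B: element of order p gives non-injectivity
    obtain ⟨c, hc⟩ := exists_prime_orderOf_dvd_card (G := Fˣ) p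
      (by rw [Fintype.card_units, hq]; exact hpq)
    have hcord : orderOf (↑c : F) = p := by rw [orderOf_units, hc]
    have hc1 : (↑c : F) ≠ 1 := by
      intro h
      rw [h, orderOf_one] at hcord
      exact hp.one_lt.ne hcord
    have hcr : (↑c : F) ^ r = 1 := orderOf_dvd_iff_pow_eq_one.mp (hcord ▸ hpr)
    have hcs : (↑c : F) ^ s = 1 := orderOf_dvd_iff_pow_eq_one.mp (hcord ▸ hps)
    have : (↑c : F) = 1 := by
      apply hbij.1
      simp only [hcr, hcs, one_pow, one_mul]
    exact hc1 this
  · -- gcd = 1 → bijective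
    intro hgcd
    rw [Fintype.bijective_iff_injective_and_card]
    refine ⟨?_, rfl⟩
    intro x y hxy
    simp only at hxy
    rcases eq_or_ne x 0 with rfl | hx0
    · rw [zero_pow hr.ne', zero_mul] at hxy
      by_contra hy
      have hy0 : y ≠ 0 := fun h => hy h.symm
      exact (mul_ne_zero (pow_ne_zero r hy0) (hAne y hy0)) hxy.symm
    rcases eq_or_ne y 0 with rfl | hy0
    · rw [zero_pow hr.ne', zero_mul] at hxy
      exact absurd hxy (mul_ne_zero (pow_ne_zero r hx0) (hAne x hx0))
    -- both nonzero
    have hz : ∀ n : ℕ, (x / y) ^ n = 1 ↔ x ^ n = y ^ n := by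
      intro n
      rw [div_pow, div_eq_one_iff_eq (pow_ne_zero n hy0)]
    have hq1z : (x / y) ^ (q - 1) = 1 := hq1 _ (div_ne_zero hx0 hy0)
    have h1 : x ^ (r * s) = y ^ (r * s) := by
      have := congrArg (· ^ s) hxy
      simpa only [mul_pow, hA x hx0, hA y hy0, mul_one, ← pow_mul] using this
    have hgrs : Nat.gcd (r * s) (q - 1) = s := by
      have hrl : Nat.gcd r ℓ = 1 := by
        refine Nat.eq_one_of_dvd_one (hgcd ▸ ?_)
        exact Nat.dvd_gcd (Nat.gcd_dvd_left r ℓ)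
          ((Nat.gcd_dvd_right r ℓ).trans ⟨s, hls.symm⟩)
      rw [← hls, Nat.gcd_mul_right, hrl, one_mul]
    have h2 : x ^ s = y ^ s := by
      have := hgcd1 (x / y) (r * s) (q - 1) ((hz _).mpr h1) hq1z
      rw [hgrs] at this
      exact (hz s).mp this
    have h3 : x ^ r = y ^ r := by
      rw [h2] at hxy
      exact mul_right_cancel₀ (hAne y hy0) hxy
    have h4 : (x / y) ^ 1 = 1 := by
      have := hgcd1 (x / y) r (q - 1) ((hz r).mpr h3) hq1z
      rwa [hgcd] at this
    rw [pow_one, div_eq_one_iff_eq hy0] at h4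
    exact h4
end

section
/- Let p be a prime, k, n positive integers, q = p^k, and d = (q^n - 1)/(q - 1) + 1. For a ∈ F_{q^n}, set a_i = a^{q^i} for 0 ≤ i ≤ n-1 and define h_a(x) = x · ∏_{i=0}^{n-1} (x + a_i). Then x^d + a·x is a permutation polynomial of F_{q^n} if and only if h_a(x) is a permutation polynomial of F_q. -/
open Finset

/-- In a finite field, if `card F - 1 = m * s` and `c ^ m = 1` with `c ≠ 0`,
then `c` is an `s`-th power. -/
private lemma exists_pow_eq_aux {F : Type*} [Field F] [Fintype F] (s m : ℕ)
    (hm0 : 0 < m) (hm : Fintype.card F - 1 = m * s) (c : F) (hc : c ≠ 0)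
    (hc1 : c ^ m = 1) : ∃ b : F, b ^ s = c := by
  obtain ⟨ζ, hζ⟩ := IsCyclic.exists_generator (α := Fˣ)
  have hord : orderOf ζ = Nat.card Fˣ := orderOf_eq_card_of_forall_mem_zpowers hζ
  set u : Fˣ := Units.mk0 c hc with hu
  obtain ⟨j, hj⟩ : u ∈ Submonoid.powers ζ := by
    rw [mem_powers_iff_mem_zpowers]; exact hζ u
  have hj' : ζ ^ j = u := hj
  have hu1 : u ^ m = 1 := by
    ext
    rw [Units.val_pow_eq_pow_val]
    simpa [hu] using hc1
  have hdvd : Nat.card Fˣ ∣ j * m := by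
    rw [← hord, orderOf_dvd_iff_pow_eq_one, pow_mul, hj', hu1]
  have hcard : Nat.card Fˣ = m * s := by
    rw [Nat.card_units, Nat.card_eq_fintype_card, hm]
  have hsj : s ∣ j := by
    rw [hcard, mul_comm j m] at hdvd
    exact (Nat.mul_dvd_mul_iff_left hm0).mp hdvd
  obtain ⟨i, rfl⟩ := hsj
  refine ⟨(ζ : F) ^ i, ?_⟩
  have hval : ((ζ ^ (s * i) : Fˣ) : F) = c := by rw [hj']; simp [hu]
  rw [← hval, Units.val_pow_eq_pow_val, ← pow_mul, mul_comm i s]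

private lemma charP_of_card_aux {F : Type*} [Field F] [Fintype F] (p m : ℕ)
    (hp : p.Prime) (hm : 0 < m) (h : Fintype.card F = p ^ m) : CharP F p := by
  have hchar : CharP F (ringChar F) := ringChar.charP F
  have hcp : (ringChar F).Prime := CharP.char_is_prime F (ringChar F)
  obtain ⟨n', hn', hcard⟩ := FiniteField.card F (ringChar F)
  have hdvd : ringChar F ∣ p ^ m := by
    rw [← h, hcard]
    exact dvd_pow_self _ n'.pos.ne'
  have hrc : ringChar F = p :=
    (Nat.prime_dvd_prime_iff_eq hcp hp).mp (hcp.dvd_of_dvd_pow hdvd)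
  rwa [hrc] at hchar

/-- x^d + a x is a PP of F_{q^n} iff h_a(x) = x ∏ (x + a^{q^i}) is a PP of F_q,
where d = (q^n - 1)/(q - 1) + 1 and q = p^k. -/
theorem pp_iff_ha_pp (p k n : ℕ) (hp : p.Prime) (hk : 0 < k) (hn : 0 < n)
    {F : Type*} [Field F] [Fintype F] (hF : Fintype.card F = (p ^ k) ^ n)
    (a : F) (d : ℕ) (hd : d = ((p ^ k) ^ n - 1) / (p ^ k - 1) + 1) :
    Function.Bijective (fun x : F => x ^ d + a * x) ↔
      Set.BijOn (fun x : F => x * ∏ i ∈ Finset.range n, (x + a ^ (p ^ k) ^ i))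
        {x : F | x ^ p ^ k = x} {x : F | x ^ p ^ k = x} := by
  have hfact : Fact p.Prime := ⟨hp⟩
  set q : ℕ := p ^ k with hq
  have hq1 : 1 < q := Nat.one_lt_pow hk.ne' hp.one_lt
  have hq0 : 0 < q := by omega
  set s : ℕ := ∑ i ∈ range n, q ^ i with hs
  have hs1 : 1 ≤ s := by
    calc 1 = ∑ i ∈ range 1, q ^ i := by simp
    _ ≤ s := Finset.sum_le_sum_of_subset (Finset.range_subset_range.mpr hn)
  -- geometric sum identity in ℕ
  have hgeom : q ^ n - 1 = (q - 1) * s := by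
    rw [hs]
    have hz : ((q : ℤ) - 1) * (∑ i ∈ range n, (q : ℤ) ^ i) = (q : ℤ) ^ n - 1 := by
      rw [mul_comm]; exact geom_sum_mul (q : ℤ) n
    have h1 : (1 : ℕ) ≤ q ^ n := Nat.one_le_pow _ _ hq0
    zify [h1, hq1.le]
    push_cast at hz ⊢
    linarith
  have hd' : d = s + 1 := by
    rw [hd]
    congr 1
    rw [hgeom]
    exact Nat.mul_div_cancel_left s (by omega)
  have hQ : Fintype.card F = q ^ n := hF
  have hsq : (q - 1) * s = Fintype.card F - 1 := by rw [hQ, hgeom]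
  have hcharP : CharP F p := charP_of_card_aux p (k * n) hp (by positivity)
    (by rw [hQ, hq, ← pow_mul])
  -- x ^ s is always in the fixed set
  have hSmem : ∀ x : F, (x ^ s) ^ q = x ^ s := by
    intro x
    rcases eq_or_ne x 0 with rfl | hx
    · rw [zero_pow (by omega : s ≠ 0), zero_pow (by omega : q ≠ 0)]
    · have h1 : (x ^ s) ^ (q - 1) = 1 := by
        rw [← pow_mul, mul_comm s (q - 1), hsq]
        exact FiniteField.pow_card_sub_one_eq_one x hx
      calc (x ^ s) ^ q = (x ^ s) ^ (q - 1) * x ^ s := by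
            rw [← pow_succ]; congr 1; omega
      _ = x ^ s := by rw [h1, one_mul]
  -- key identity: for t fixed by Frobenius, the product equals (t+a)^s
  have hkey : ∀ t : F, t ^ q = t → (∏ i ∈ range n, (t + a ^ q ^ i)) = (t + a) ^ s := by
    intro t ht
    have htq : ∀ i : ℕ, t ^ q ^ i = t := by
      intro i
      induction i with
      | zero => simp
      | succ i ih => rw [pow_succ, pow_mul, ih, ht]
    have hadd : ∀ i : ℕ, (t + a) ^ q ^ i = t + a ^ q ^ i := by
      intro i
      have he : q ^ i = p ^ (k * i) := by rw [hq, ← pow_mul]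
      calc (t + a) ^ q ^ i = (t + a) ^ p ^ (k * i) := by rw [he]
        _ = t ^ p ^ (k * i) + a ^ p ^ (k * i) := add_pow_char_pow ..
        _ = t + a ^ q ^ i := by rw [← he, htq]
    rw [hs, ← Finset.prod_pow_eq_pow_sum]
    exact Finset.prod_congr rfl fun i _ => (hadd i).symm
  -- the polynomial maps, rewritten
  set f : F → F := fun x => x ^ d + a * x with hf
  set g : F → F := fun t => t * (t + a) ^ s with hg
  have hfx : ∀ x : F, f x = x * (x ^ s + a) := by
    intro x
    show x ^ d + a * x = x * (x ^ s + a)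
    rw [hd']
    ring
  have hfg : ∀ x : F, (f x) ^ s = g (x ^ s) := by
    intro x
    rw [hfx, mul_pow]
  have hf0 : f 0 = 0 := by
    show (0 : F) ^ d + a * 0 = 0
    rw [zero_pow (by omega : d ≠ 0), mul_zero, add_zero]
  set S : Set F := {x : F | x ^ q = x} with hSdef
  have hgS : ∀ t ∈ S, (fun x : F => x * ∏ i ∈ Finset.range n, (x + a ^ q ^ i)) t = g t := by
    intro t ht
    show t * ∏ i ∈ Finset.range n, (t + a ^ q ^ i) = t * (t + a) ^ s
    rw [hkey t ht]
  have hgmem : ∀ t ∈ S, g t ∈ S := by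
    intro t ht
    have h2 : ((t + a) ^ s) ^ q = (t + a) ^ s := hSmem (t + a)
    simp only [hSdef, Set.mem_setOf_eq] at ht ⊢
    show (t * (t + a) ^ s) ^ q = t * (t + a) ^ s
    rw [mul_pow, ht, h2]
  have h0S : (0 : F) ∈ S := by
    simp only [hSdef, Set.mem_setOf_eq]
    rw [zero_pow (by omega : q ≠ 0)]
  have hg0 : g 0 = 0 := by
    show (0 : F) * (0 + a) ^ s = 0
    rw [zero_mul]
  have hSfin : S.Finite := Set.toFinite S
  constructor
  · -- forward direction
    intro hbij
    have hmapsTo : Set.MapsTo (fun x : F => x * ∏ i ∈ Finset.range n, (x + a ^ q ^ i)) S S := by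
      intro t ht
      rw [hgS t ht]
      exact hgmem t ht
    rw [← (hSfin.surjOn_iff_bijOn_of_mapsTo hmapsTo)]
    intro c hc
    rcases eq_or_ne c 0 with rfl | hc0
    · exact ⟨0, h0S, by rw [hgS 0 h0S, hg0]⟩
    · have hcq : c ^ q = c := hc
      have hc1 : c ^ (q - 1) = 1 := by
        have h2 : c ^ (q - 1) * c = 1 * c := by
          rw [one_mul, ← pow_succ]
          calc c ^ (q - 1 + 1) = c ^ q := by congr 1; omega
          _ = c := hcq
        exact mul_right_cancel₀ hc0 h2
      obtain ⟨b, hb⟩ := exists_pow_eq_aux s (q - 1) (by omega) hsq.symm c hc0 hc1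
      have hbne : b ≠ 0 := by
        rintro rfl
        rw [zero_pow (by omega : s ≠ 0)] at hb
        exact hc0 hb.symm
      obtain ⟨x, hx⟩ := hbij.surjective b
      have hx' : f x = b := hx
      have hxne : x ≠ 0 := by
        rintro rfl
        rw [hf0] at hx'
        exact hbne hx'.symm
      refine ⟨x ^ s, hSmem x, ?_⟩
      rw [hgS _ (hSmem x), ← hfg, hx', hb]
  · -- backward direction
    intro hbij
    have hbij' : Set.BijOn g S S := Set.BijOn.congr hbij (fun t ht => hgS t ht)
    have hinj : Set.InjOn g S := hbij'.injOn
    -- f has no nonzero roots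
    have hne : ∀ x : F, x ≠ 0 → f x ≠ 0 := by
      intro x hx hfxz
      rw [hfx] at hfxz
      rcases mul_eq_zero.mp hfxz with h | h
      · exact hx h
      · have hgz : g (x ^ s) = 0 := by
          show x ^ s * (x ^ s + a) ^ s = 0
          rw [h, zero_pow (by omega : s ≠ 0), mul_zero]
        have hxs0 : (x : F) ^ s ≠ 0 := pow_ne_zero _ hx
        exact hxs0 (hinj (hSmem x) h0S (by rw [hgz, hg0]))
    have hfinj : Function.Injective f := by
      intro x y hxy
      rcases eq_or_ne x 0 with rfl | hx
      · rw [hf0] at hxy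
        by_contra hy
        exact hne y (Ne.symm hy) hxy.symm
      rcases eq_or_ne y 0 with rfl | hy
      · rw [hf0] at hxy
        exact absurd hxy (hne x hx)
      have hss : x ^ s = y ^ s := by
        apply hinj (hSmem x) (hSmem y)
        rw [← hfg, ← hfg, hxy]
      have hfactor : x ^ s + a ≠ 0 := by
        intro h
        apply hne x hx
        rw [hfx, h, mul_zero]
      have heq : x * (x ^ s + a) = y * (x ^ s + a) := by
        rw [← hfx, hxy, hfx, hss]
      exact mul_right_cancel₀ hfactor heq
    exact Finite.injective_iff_bijective.mp hfinj
end

section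
/- Let p be an odd prime, n a positive integer with n | p - 1, m a positive integer, and c ∈ F_{p^m} with c^((p^m - 1)/n) ≠ 1 (i.e., c is not an n-th power in F_{p^m}*). Then f(x) = x · (x^n - c)^((p-1)/n) is a permutation polynomial of F_{p^m}. -/
/-- x (x^n - c)^((p-1)/n) is a PP of F_{p^m} when c is not an n-th power. -/
theorem pp_exceptional (p n m : ℕ) (hp : p.Prime) (hodd : Odd p)
    (hn : 0 < n) (hnd : n ∣ p - 1) (hm : 0 < m)
    {F : Type*} [Field F] [Fintype F] (hF : Fintype.card F = p ^ m)
    (c : F) (hc : c ^ ((p ^ m - 1) / n) ≠ 1) :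
    Function.Bijective (fun x : F => x * (x ^ n - c) ^ ((p - 1) / n)) := by
  haveI : Fact p.Prime := ⟨hp⟩
  -- characteristic of F is p
  haveI hchar : CharP F p := by
    have hr : CharP F (ringChar F) := ringChar.charP F
    obtain ⟨k, hpr, hcard⟩ := FiniteField.card F (ringChar F)
    have hdvd : p ∣ ringChar F := by
      refine hp.dvd_of_dvd_pow (n := (k : ℕ)) ?_
      rw [← hcard, hF]
      exact dvd_pow_self p hm.ne'
    have : ringChar F = p := ((Nat.prime_dvd_prime_iff_eq hp hpr).mp hdvd).symm
    rwa [this] at hr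
  set e := (p - 1) / n with he
  have hs : (p - 1) + 1 = p := Nat.succ_pred_eq_of_pos hp.pos
  set s := p - 1 with hsdef
  have hne : n * e = s := Nat.mul_div_cancel' hnd
  have hpq : s ∣ p ^ m - 1 := by
    have := Nat.sub_dvd_pow_sub_pow p 1 m
    simpa using this
  set k := (p ^ m - 1) / s with hk
  have hsk : s * k = p ^ m - 1 := Nat.mul_div_cancel' hpq
  have hnq : n ∣ p ^ m - 1 := dvd_trans hnd hpq
  have hqn : (p ^ m - 1) / n = e * k := by
    have h : n * (e * k) = p ^ m - 1 := by rw [← mul_assoc, hne, hsk]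
    rw [← h, Nat.mul_div_cancel_left _ hn]
  have pow_q1 : ∀ z : F, z ≠ 0 → z ^ (p ^ m - 1) = 1 := by
    intro z hz
    have := FiniteField.pow_card_sub_one_eq_one z hz
    rwa [hF] at this
  have frob : ∀ z w : F, (z - w) ^ (s + 1) = z ^ (s + 1) - w ^ (s + 1) := by
    intro z w; rw [hs]; exact sub_pow_char z w
  suffices hinj : Function.Injective (fun x : F => x * (x ^ n - c) ^ e) by
    exact Finite.injective_iff_bijective.mp hinj
  rcases eq_or_ne c 0 with rfl | hc0
  · -- c = 0 : the map is x ↦ x ^ p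
    intro x y hxy
    simp only [sub_zero, ← pow_mul, ← pow_succ'] at hxy
    rw [hne, hs] at hxy
    have hxy' : x ^ p = y ^ p := hxy
    have : (x - y) ^ p = 0 := by rw [sub_pow_char, hxy', sub_self]
    have := pow_eq_zero_iff hp.pos.ne' |>.mp this
    exact sub_eq_zero.mp this
  · -- c ≠ 0
    have hnc : ∀ z : F, z ^ n - c ≠ 0 := by
      intro z
      rw [sub_ne_zero]
      intro h
      rcases eq_or_ne z 0 with rfl | hz
      · exact hc0 (by simpa [zero_pow hn.ne'] using h.symm)
      · apply hc
        rw [← h, ← pow_mul, Nat.mul_div_cancel' hnq]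
        exact pow_q1 z hz
    intro x y hxy
    simp only at hxy
    -- if x = 0 then y = 0
    rcases eq_or_ne x 0 with rfl | hx
    · simp only [zero_mul] at hxy
      rcases mul_eq_zero.mp hxy.symm with h | h
      · exact h.symm
      · exact absurd (pow_eq_zero_iff'.mp h).1 (hnc y)
    rcases eq_or_ne y 0 with rfl | hy
    · simp only [zero_mul] at hxy
      rcases mul_eq_zero.mp hxy with h | h
      · exact h
      · exact absurd (pow_eq_zero_iff'.mp h).1 (hnc x)
    -- both nonzero
    set X := x ^ n with hX
    set Y := y ^ n with hY
    have hXc : X - c ≠ 0 := hnc x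
    have hYc : Y - c ≠ 0 := hnc y
    have hXY : X = Y := by
      by_contra hne'
      have hu : X - Y ≠ 0 := sub_ne_zero.mpr hne'
      -- raise hxy to the n-th power
      have eq2 : X * (X - c) ^ s = Y * (Y - c) ^ s := by
        have := congrArg (· ^ n) hxy
        simpa only [mul_pow, ← pow_mul, mul_comm e n, hne, mul_comm n e] using this
      have heq2 : X * (X ^ (s + 1) - c ^ (s + 1)) * (Y - c)
          = Y * (Y ^ (s + 1) - c ^ (s + 1)) * (X - c) := by
        rw [← frob, ← frob]
        calc X * (X - c) ^ (s + 1) * (Y - c)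
            = (X * (X - c) ^ s) * ((X - c) * (Y - c)) := by ring
          _ = (Y * (Y - c) ^ s) * ((X - c) * (Y - c)) := by rw [eq2]
          _ = Y * (Y - c) ^ (s + 1) * (X - c) := by ring
      have h3 : (X - Y) ^ (s + 1) * (Y * (X - c)) = c * (X - Y) * (X - c) ^ (s + 1) := by
        rw [frob, frob]
        linear_combination heq2
      have key : (X - Y) ^ s * Y = c * (X - c) ^ s := by
        apply mul_right_cancel₀ (mul_ne_zero hu hXc)
        linear_combination h3
      have h5 : Y ^ k = c ^ k := by
        have h := congrArg (· ^ k) key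
        simp only [mul_pow, ← pow_mul] at h
        rw [hsk, pow_q1 _ hu, pow_q1 _ hXc, one_mul, mul_one] at h
        exact h
      apply hc
      rw [hqn, mul_comm e k, pow_mul, ← h5, ← pow_mul, hY, ← pow_mul]
      rw [show n * (k * e) = p ^ m - 1 by rw [mul_comm k e, ← mul_assoc, hne, hsk]]
      exact pow_q1 y hy
    rw [hXY] at hxy
    exact mul_right_cancel₀ (pow_ne_zero e hYc) hxy
end

section
/- Let p be an odd prime, k, n positive integers with n | p - 1, q = p^k, and d = (q^{p-1} - 1)/(q - 1) + 1. Let a ∈ F_{q^n} with a^{q-1} an n-th root of unity different from 1. Then both a^{-1}·x^d and a^{-1}·x^d + x induce bijections of F_{q^n} (i.e., a^{-1}·x^d is a complete permutation polynomial of F_{q^n}). -/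
/-!
Write `q = p ^ k`, `p - 1 = n * m` and `N x = x ^ (1 + q + ⋯ + q ^ (n - 1))`, the norm from
`F_{q^n}` to `F_q`. Then `x ^ d = x * N x ^ m`, and a map `x ↦ x * g (N x)` is injective as soon as `g`
has no zero on `F_q^*` and `c ↦ c * N (g c)` is injective there, because
`N (x * g (N x)) = N x * N (g (N x))`.

For `g c = c ^ m` this is `c ↦ c ^ p`. For `g c = c ^ m + a`, the conjugates of `a` are `a * b ^ i`
with `b = a ^ (q - 1)` of some order `e ∣ n`, so `N (c ^ m + a) = ((c ^ m) ^ e - α) ^ (n / e)` with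
`α = (-a) ^ e ∈ F_q`. Raising `c * N (c ^ m + a)` to the power `m * e` gives `z * (z - α) ^ (p - 1)`
with `z = c ^ (m * e)`, so `z ^ l = 1` for `l = (q - 1) / (m * e)`. A Frobenius computation turns a
collision `z₁ ≠ z₂` into `(z₁ - z₂) ^ (p - 1) * z₁ = α * (z₂ - α) ^ (p - 1)`, whose `l`-th power
gives `α ^ l = 1`, hence `a ^ (q - 1) = (-a) ^ (q - 1) = 1`.
-/

open Finset Polynomial

theorem Function.Periodic.prod_range_mul_eq_pow {M : Type*} [CommMonoid M] {f : ℕ → M} {e : ℕ}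
    (hf : Function.Periodic f e) (r : ℕ) :
    ∏ i ∈ range (e * r), f i = (∏ i ∈ range e, f i) ^ r := by
  induction r with
  | zero => simp
  | succ r ih =>
    rw [Nat.mul_succ, prod_range_add, ih, pow_succ]
    congr 1
    refine prod_congr rfl fun i _ => ?_
    rw [add_comm, mul_comm]
    exact hf.nat_mul r i

theorem Nat.geomSum_mul_sub_one (q n : ℕ) : (∑ i ∈ range n, q ^ i) * (q - 1) = q ^ n - 1 := by
  rcases Nat.eq_zero_or_pos q with rfl | hq
  · cases n <;> simp
  · obtain ⟨t, rfl⟩ : ∃ t, q = t + 1 := ⟨q - 1, by omega⟩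
    rw [Nat.add_sub_cancel, ← geom_sum_mul_add t n, Nat.add_sub_cancel]

section Monoid

variable {M : Type*}

theorem pow_eq_self_of_pow_sub_one_eq_one [Monoid M] {x : M} {q : ℕ} (hq : q ≠ 0)
    (h : x ^ (q - 1) = 1) : x ^ q = x := by
  rw [← pow_sub_one_mul hq, h, one_mul]

theorem pow_sub_one_eq_one_of_pow_eq_self [MonoidWithZero M] [IsCancelMulZero M] {x : M}
    (hx : x ≠ 0) {q : ℕ} (hq : q ≠ 0) (h : x ^ q = x) : x ^ (q - 1) = 1 := by
  rwa [← pow_sub_one_mul hq, mul_eq_right₀ hx] at h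

theorem pow_pow_eq_self_of_pow_eq_self [Monoid M] {x : M} {q : ℕ} (hx : x ^ q = x) (i : ℕ) :
    x ^ q ^ i = x := by
  have h := (show Function.IsFixedPt (· ^ q) x from hx).iterate i
  rwa [Function.IsFixedPt, pow_iterate] at h

variable [CommMonoid M]

theorem pow_geomSum_of_pow_eq_self {c : M} {q : ℕ} (hc : c ^ q = c) (n : ℕ) :
    c ^ ∑ i ∈ range n, q ^ i = c ^ n := by
  rw [← prod_pow_eq_pow_sum, prod_congr rfl fun i _ => pow_pow_eq_self_of_pow_eq_self hc i,
    prod_const, card_range]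

theorem pow_geomSum_mul_eq_pow {x : M} {q n : ℕ} (hx : x ^ q ^ n = x) (m : ℕ) :
    x ^ ∑ i ∈ range (n * m), q ^ i = (x ^ ∑ i ∈ range n, q ^ i) ^ m := by
  simp only [← prod_pow_eq_pow_sum]
  refine Function.Periodic.prod_range_mul_eq_pow (fun i => ?_) m
  rw [pow_add, mul_comm, pow_mul, hx]

end Monoid

theorem IsPrimitiveRoot.prod_range_add_mul_pow {R : Type*} [CommRing R] [IsDomain R] {b : R}
    {e : ℕ} (hb : IsPrimitiveRoot b e) (he : 0 < e) (w a : R) :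
    ∏ i ∈ range e, (w + a * b ^ i) = w ^ e - (-a) ^ e := by
  have h := congrArg (Polynomial.eval w) (X_pow_sub_C_eq_prod hb he (rfl : (-a) ^ e = _))
  simp only [eval_sub, eval_pow, eval_X, eval_C, eval_prod] at h
  rw [h]
  exact prod_congr rfl fun i _ => by ring

section ExpChar

variable {R : Type*} [CommRing R] {p : ℕ} [ExpChar R p] {k : ℕ}

theorem add_pow_pow_eq_add_mul_pow {u a b : R} (hu : u ^ p ^ k = u) (ha : a ^ p ^ k = b * a)
    (hb : b ^ p ^ k = b) (i : ℕ) : (u + a) ^ (p ^ k) ^ i = u + a * b ^ i := by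
  induction i with
  | zero => simp
  | succ i ih =>
    rw [pow_succ, pow_mul, ih, add_pow_expChar_pow, mul_pow, ha, ← pow_mul, mul_comm i, pow_mul,
      hb, hu]
    ring

theorem add_pow_geomSum_eq_sub_pow [IsDomain R] {e : ℕ} {u a b : R} (hu : u ^ p ^ k = u)
    (ha : a ^ p ^ k = b * a) (hb : b ^ p ^ k = b) (hbe : IsPrimitiveRoot b e) (he : 0 < e)
    (r : ℕ) : (u + a) ^ ∑ i ∈ range (e * r), (p ^ k) ^ i = (u ^ e - (-a) ^ e) ^ r := by
  have hper : Function.Periodic (fun i => u + a * b ^ i) e := fun i => by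
    simp only [pow_add, hbe.pow_eq_one, mul_one]
  rw [← prod_pow_eq_pow_sum, prod_congr rfl fun i _ => add_pow_pow_eq_add_mul_pow hu ha hb i,
    hper.prod_range_mul_eq_pow, hbe.prod_range_add_mul_pow he]

end ExpChar

section Field

variable {K : Type*} [Field K] {p : ℕ} [ExpChar K p]

theorem sub_pow_pred_mul_eq_of_mul_sub_pow_pred_eq {α z₁ z₂ : K}
    (h : z₁ * (z₁ - α) ^ (p - 1) = z₂ * (z₂ - α) ^ (p - 1)) (hne : z₁ ≠ z₂) (hz₂ : z₂ ≠ α) :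
    (z₁ - z₂) ^ (p - 1) * z₁ = α * (z₂ - α) ^ (p - 1) := by
  obtain ⟨s, hs⟩ : ∃ s, p = s + 1 := ⟨p - 1, (Nat.sub_add_cancel (expChar_pos K p)).symm⟩
  have frob : ∀ u v : K, (u - v) ^ s * (u - v) = u ^ s * u - v ^ s * v := fun u v => by
    simpa only [hs, pow_succ] using sub_pow_expChar (R := K) (p := p) u v
  subst hs
  simp only [Nat.add_sub_cancel] at h ⊢
  -- after multiplying by `(z₁ - z₂) * (z₂ - α)` only `p`-th powers of differences occur
  refine mul_right_cancel₀ (mul_ne_zero (sub_ne_zero.mpr hne) (sub_ne_zero.mpr hz₂)) ?_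
  linear_combination (z₁ * (z₂ - α)) * frob z₁ z₂ - (α * (z₁ - z₂)) * frob z₂ α
    + ((z₁ - α) * (z₂ - α)) * h - (z₁ * (z₂ - α)) * frob z₁ α + (z₂ * (z₁ - α)) * frob z₂ α

theorem sub_pow_pow_sub_one_eq_one {k : ℕ} {u v : K} (hu : u ^ p ^ k = u) (hv : v ^ p ^ k = v)
    (hne : u ≠ v) : (u - v) ^ (p ^ k - 1) = 1 :=
  pow_sub_one_eq_one_of_pow_eq_self (sub_ne_zero.mpr hne) (expChar_pow_pos K p k).ne'
    (by rw [sub_pow_expChar_pow, hu, hv])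

theorem eq_of_mul_sub_pow_pred_eq {k l : ℕ} {α z₁ z₂ : K} (hz₁ : z₁ ^ p ^ k = z₁)
    (hz₂ : z₂ ^ p ^ k = z₂) (hα : α ^ p ^ k = α) (hz₁l : z₁ ^ l = 1) (hz₂l : z₂ ^ l = 1)
    (hαl : α ^ l ≠ 1) (hl : p ^ k - 1 ∣ (p - 1) * l)
    (h : z₁ * (z₁ - α) ^ (p - 1) = z₂ * (z₂ - α) ^ (p - 1)) : z₁ = z₂ := by
  by_contra hne
  have hz₂α : z₂ ≠ α := by rintro rfl; exact hαl hz₂l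
  obtain ⟨t, ht⟩ := hl
  have hpow : ∀ u v : K, u ^ p ^ k = u → v ^ p ^ k = v → u ≠ v → ((u - v) ^ (p - 1)) ^ l = 1 :=
    fun u v hu hv huv => by
      rw [← pow_mul, ht, pow_mul, sub_pow_pow_sub_one_eq_one hu hv huv, one_pow]
  have key := congrArg (· ^ l) (sub_pow_pred_mul_eq_of_mul_sub_pow_pred_eq h hne hz₂α)
  simp only [mul_pow, hpow _ _ hz₁ hz₂ hne, hpow _ _ hz₂ hα hz₂α, hz₁l, mul_one] at key
  exact hαl key.symm

theorem eq_of_mul_pow_sub_pow_eq {k l M r : ℕ} {α c₁ c₂ : K} (hM : M * r = p - 1)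
    (hl : M * l = p ^ k - 1) (hα : α ^ p ^ k = α) (hαl : α ^ l ≠ 1) (hc₁ : c₁ ^ (p ^ k - 1) = 1)
    (hc₂ : c₂ ^ (p ^ k - 1) = 1) (h : c₁ * (c₁ ^ M - α) ^ r = c₂ * (c₂ ^ M - α) ^ r) :
    c₁ = c₂ := by
  have fixed : ∀ c : K, c ^ (p ^ k - 1) = 1 → (c ^ M) ^ p ^ k = c ^ M := fun c hc => by
    rw [← pow_mul, mul_comm, pow_mul,
      pow_eq_self_of_pow_sub_one_eq_one (expChar_pow_pos K p k).ne' hc]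
  have root : ∀ c : K, c ^ (p ^ k - 1) = 1 → (c ^ M) ^ l = 1 := fun c hc => by
    rw [← pow_mul, hl, hc]
  have hz : c₁ ^ M = c₂ ^ M := by
    refine eq_of_mul_sub_pow_pred_eq (fixed c₁ hc₁) (fixed c₂ hc₂) hα (root c₁ hc₁) (root c₂ hc₂)
      hαl ⟨r, by rw [← hM, ← hl]; ring⟩ ?_
    simpa only [mul_pow, ← pow_mul, mul_comm r M, hM] using congrArg (· ^ M) h
  have hzα : c₁ ^ M - α ≠ 0 := sub_ne_zero.mpr fun h' => hαl (h' ▸ root c₁ hc₁)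
  rw [← hz] at h
  exact mul_right_cancel₀ (pow_ne_zero r hzα) h

end Field

section FiniteField

variable {F : Type*} [Field F] [Fintype F]

theorem pow_geomSum_pow_sub_one_eq_one {q n : ℕ} (hF : Fintype.card F = q ^ n) {x : F}
    (hx : x ≠ 0) : (x ^ ∑ i ∈ range n, q ^ i) ^ (q - 1) = 1 := by
  rw [← pow_mul, Nat.geomSum_mul_sub_one, ← hF, FiniteField.pow_card_sub_one_eq_one x hx]

theorem injective_mul_comp_pow_geomSum {q n : ℕ} (hF : Fintype.card F = q ^ n) {g : F → F}
    (hg : ∀ c : F, c ≠ 0 → c ^ (q - 1) = 1 → g c ≠ 0)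
    (hinj : ∀ c₁ c₂ : F, c₁ ^ (q - 1) = 1 → c₂ ^ (q - 1) = 1 →
      c₁ * g c₁ ^ ∑ i ∈ range n, q ^ i = c₂ * g c₂ ^ ∑ i ∈ range n, q ^ i → c₁ = c₂) :
    Function.Injective fun x : F => x * g (x ^ ∑ i ∈ range n, q ^ i) := by
  have hzero : ∀ x : F, x * g (x ^ ∑ i ∈ range n, q ^ i) = 0 → x = 0 := fun x h => by
    by_contra hx
    exact hg _ (pow_ne_zero _ hx) (pow_geomSum_pow_sub_one_eq_one hF hx)
      ((mul_eq_zero.mp h).resolve_left hx)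
  intro x y h
  simp only at h
  rcases eq_or_ne x 0 with rfl | hx
  · exact (hzero y (by rw [← h, zero_mul])).symm
  rcases eq_or_ne y 0 with rfl | hy
  · exact hzero x (by rw [h, zero_mul])
  have hnorm : x ^ ∑ i ∈ range n, q ^ i = y ^ ∑ i ∈ range n, q ^ i :=
    hinj _ _ (pow_geomSum_pow_sub_one_eq_one hF hx) (pow_geomSum_pow_sub_one_eq_one hF hy)
      (by simpa only [mul_pow] using congrArg (· ^ ∑ i ∈ range n, q ^ i) h)
  rw [hnorm] at h
  exact mul_right_cancel₀ (hg _ (pow_ne_zero _ hy) (pow_geomSum_pow_sub_one_eq_one hF hy)) h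

variable {p k n m : ℕ} [ExpChar F p]

theorem injective_mul_pow_geomSum_pow (hF : Fintype.card F = (p ^ k) ^ n) (hnm : n * m + 1 = p) :
    Function.Injective fun x : F => x * (x ^ ∑ i ∈ range n, (p ^ k) ^ i) ^ m := by
  refine injective_mul_comp_pow_geomSum (g := (· ^ m)) hF (fun c hc _ => pow_ne_zero m hc)
    fun c₁ c₂ h₁ h₂ h => frobenius_inj F p ?_
  have hnorm : ∀ c : F, c ^ (p ^ k - 1) = 1 →
      c * (c ^ m) ^ ∑ i ∈ range n, (p ^ k) ^ i = c ^ p := fun c hc => by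
    rw [← pow_mul, mul_comm m, pow_mul, pow_geomSum_of_pow_eq_self
      (pow_eq_self_of_pow_sub_one_eq_one (expChar_pow_pos F p k).ne' hc), ← pow_mul,
      ← pow_succ', hnm]
  simpa only [frobenius_def, ← hnorm c₁ h₁, ← hnorm c₂ h₂] using h

theorem injective_mul_pow_geomSum_pow_add (hodd : Odd p) (hn : 0 < n)
    (hF : Fintype.card F = (p ^ k) ^ n) (hnm : n * m = p - 1) {a : F}
    (ha : (a ^ (p ^ k - 1)) ^ n = 1) (ha' : a ^ (p ^ k - 1) ≠ 1) :
    Function.Injective fun x : F => x * ((x ^ ∑ i ∈ range n, (p ^ k) ^ i) ^ m + a) := by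
  set q := p ^ k
  set b := a ^ (q - 1)
  have hq : q ≠ 0 := (expChar_pow_pos F p k).ne'
  have hneg : (-a) ^ (q - 1) = b := (Nat.Odd.sub_odd hodd.pow odd_one).neg_pow a
  have hpq : p - 1 ∣ q - 1 := by simpa using Nat.sub_dvd_pow_sub_pow p 1 k
  have hbq : b ^ q = b := by
    obtain ⟨t, ht⟩ := (Dvd.intro m hnm).trans hpq
    exact pow_eq_self_of_pow_sub_one_eq_one hq (by rw [ht, pow_mul, ha, one_pow])
  have haq : a ^ q = b * a := (pow_sub_one_mul hq a).symm
  have hbe := IsPrimitiveRoot.orderOf b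
  set e := orderOf b
  have he : 0 < e := (isOfFinOrder_iff_pow_eq_one.mpr ⟨n, hn, ha⟩).orderOf_pos
  obtain ⟨r, hr⟩ : e ∣ n := orderOf_dvd_of_pow_eq_one ha
  obtain ⟨l, hl⟩ : m * e ∣ q - 1 := (Dvd.intro r (by rw [← hnm, hr]; ring)).trans hpq
  have hαq : ((-a) ^ e) ^ q = (-a) ^ e := by
    rw [← pow_mul, mul_comm, pow_mul, hodd.pow.neg_pow, haq, ← mul_neg, mul_pow, hbe.pow_eq_one,
      one_mul]
  have hαl : ((-a) ^ e) ^ l ≠ 1 := fun h => ha' <| by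
    rw [← hneg, hl, show m * e * l = e * l * m by ring, pow_mul, pow_mul, h, one_pow]
  refine injective_mul_comp_pow_geomSum (g := (· ^ m + a)) hF (fun c _ hc h => ha' ?_)
    fun c₁ c₂ h₁ h₂ h => ?_
  · rw [← hneg, ← eq_neg_iff_add_eq_zero.mpr h, ← pow_mul, mul_comm, pow_mul, hc, one_pow]
  · have hnorm : ∀ c : F, c ^ (q - 1) = 1 →
        (c ^ m + a) ^ ∑ i ∈ range n, q ^ i = ((c ^ m) ^ e - (-a) ^ e) ^ r := fun c hc => by
      have hcq : (c ^ m) ^ q = c ^ m := by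
        rw [← pow_mul, mul_comm, pow_mul, pow_eq_self_of_pow_sub_one_eq_one hq hc]
      rw [hr]
      exact add_pow_geomSum_eq_sub_pow hcq haq hbq hbe he r
    rw [hnorm c₁ h₁, hnorm c₂ h₂, ← pow_mul, ← pow_mul] at h
    exact eq_of_mul_pow_sub_pow_eq (by rw [← hnm, hr]; ring) hl.symm hαq hαl h₁ h₂ h

end FiniteField

/-- CPP monomials with d = (q^{p-1}-1)/(q-1)+1 and a^{q-1} ∈ μ_n \ {1}, n | p-1. -/
theorem cpp_monomial_n_dvd_p_sub_one (p k n : ℕ) (hp : p.Prime) (hodd : Odd p)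
    (hk : 0 < k) (hn : 0 < n) (hnd : n ∣ p - 1)
    {F : Type*} [Field F] [Fintype F] (hF : Fintype.card F = (p ^ k) ^ n)
    (d : ℕ) (hd : d = ((p ^ k) ^ (p - 1) - 1) / (p ^ k - 1) + 1)
    (a : F) (ha1 : (a ^ (p ^ k - 1)) ^ n = 1) (ha2 : a ^ (p ^ k - 1) ≠ 1) :
    Function.Bijective (fun x : F => a⁻¹ * x ^ d) ∧
      Function.Bijective (fun x : F => a⁻¹ * x ^ d + x) := by
  have : Fact p.Prime := ⟨hp⟩
  have : CharP F p := charP_of_card_eq_prime_pow (by rw [hF, ← pow_mul])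
  obtain ⟨m, hm⟩ := hnd
  have hq : 2 ≤ p ^ k := hp.two_le.trans (Nat.le_self_pow hk.ne' p)
  have hpow_d : ∀ x : F, x ^ d = x * (x ^ ∑ i ∈ range n, (p ^ k) ^ i) ^ m := fun x => by
    rw [hd, ← Nat.geomSum_eq hq, hm, pow_succ,
      pow_geomSum_mul_eq_pow (by rw [← hF, FiniteField.pow_card]), mul_comm]
  have ha : a ≠ 0 := by
    rintro rfl
    rw [zero_pow (by omega), zero_pow hn.ne'] at ha1
    exact zero_ne_one ha1
  have hshift : ∀ x : F, a⁻¹ * (x * (x ^ ∑ i ∈ range n, (p ^ k) ^ i) ^ m) + x =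
      a⁻¹ * (x * ((x ^ ∑ i ∈ range n, (p ^ k) ^ i) ^ m + a)) := fun x => by
    field_simp
  simp only [hpow_d, ← Finite.injective_iff_bijective, hshift]
  exact ⟨(mul_right_injective₀ (inv_ne_zero ha)).comp
      (injective_mul_pow_geomSum_pow hF (by have := hp.pos; omega)),
    (mul_right_injective₀ (inv_ne_zero ha)).comp
      (injective_mul_pow_geomSum_pow_add hodd hn hF hm.symm ha1 ha2)⟩
end

section
/- Let p be an odd prime, k a positive integer, q = p^k, and n = q - 1 (so n | q - 1 trivially). Let d = (q^{q-1} - 1)/(q - 1) + 1 and a ∈ F_{q^n} with a^{q-1} ∈ μ_n \ {1}. Then a^{-1}·x^d is a complete permutation polynomial of F_{q^n}: both a^{-1}x^d and a^{-1}x^d + x are bijections of F_{q^n}. -/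
/-!
Put `s = 1 + q + ⋯ + q ^ (n - 1)`, so that `d = s + 1` and `x ↦ x ^ s` is the norm
`F^× → 𝔽_q^× = μ_n`. Both maps are `a⁻¹ * x * h (x ^ s)`, with `h y = y` and `h y = y + a`,
and `x ↦ x * h (x ^ s)` is injective once `h` does not vanish on `μ_n` and
`y ↦ y * h y ^ s` is injective on `μ_n`. For `h y = y` the latter map is the identity, since
`n ∣ s`. For `h y = y + a`, `(y + a) ^ s` is a norm: the conjugates of `a` are `a * b ^ i` with
`b = a ^ (q - 1)`, so `(y + a) ^ s = (y ^ t - (-a) ^ t) ^ (n / t)` with `t` the order of `b`,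
and `y ^ t - (-a) ^ t` lies in `𝔽_q^×` (`q` is odd). Hence `y * (y + a) ^ s` has `t`-th power
`y ^ t`, which determines `(y + a) ^ s` and then `y`. Nonvanishing of `y + a` on `μ_n` holds
because `(-a) ^ n = b ≠ 1`.
-/

open Finset

theorem Function.Periodic.prod_range_mul {M : Type*} [CommMonoid M] {f : ℕ → M} {t : ℕ}
    (hf : Function.Periodic f t) (r : ℕ) :
    ∏ i ∈ range (r * t), f i = (∏ i ∈ range t, f i) ^ r := by
  induction r with
  | zero => simp
  | succ r ih =>
    rw [Nat.succ_mul, prod_range_add, ih, pow_succ]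
    congr 1
    exact prod_congr rfl fun i _ => by rw [add_comm]; exact hf.nat_mul r i

theorem IsPrimitiveRoot.prod_range_sub_pow_mul {R : Type*} [CommRing R] [IsDomain R] {ζ : R}
    {t : ℕ} (hζ : IsPrimitiveRoot ζ t) (ht : 0 < t) (y c : R) :
    ∏ i ∈ range t, (y - ζ ^ i * c) = y ^ t - c ^ t := by
  simpa [Polynomial.eval_prod] using
    (congrArg (Polynomial.eval y) (X_pow_sub_C_eq_prod hζ ht rfl)).symm

theorem prod_range_sub_pow_mul_eq_pow_orderOf {R : Type*} [CommRing R] [IsDomain R] {b : R}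
    {n : ℕ} (hn : 0 < n) (hb : b ^ n = 1) (y c : R) :
    ∏ i ∈ range n, (y - b ^ i * c) = (y ^ orderOf b - c ^ orderOf b) ^ (n / orderOf b) := by
  have ht : 0 < orderOf b := orderOf_pos_iff.2 (isOfFinOrder_iff_pow_eq_one.2 ⟨n, hn, hb⟩)
  have hper : Function.Periodic (fun i => y - b ^ i * c) (orderOf b) := fun i => by
    simp only [pow_add, pow_orderOf_eq_one, mul_one]
  conv_lhs => rw [← Nat.div_mul_cancel (orderOf_dvd_of_pow_eq_one hb)]
  rw [hper.prod_range_mul, (IsPrimitiveRoot.orderOf b).prod_range_sub_pow_mul ht]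

theorem pow_pow_eq_mul_pow {M : Type*} [CommMonoid M] {q : ℕ} {a b : M} (ha : a ^ q = a * b)
    (hb : b ^ q = b) (i : ℕ) : a ^ q ^ i = a * b ^ i := by
  induction i with
  | zero => simp
  | succ i ih =>
    rw [pow_succ, pow_mul, ih, mul_pow, ha, ← pow_mul, mul_comm i, pow_mul, hb, pow_succ]
    ac_rfl

section Frobenius

variable {R : Type*} [CommRing R] {p k q : ℕ} [ExpChar R p]

theorem add_pow_geom_sum_eq_prod (hq : q = p ^ k) {y : R} (hy : y ^ q = y) (a : R) (n : ℕ) :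
    (y + a) ^ ∑ i ∈ range n, q ^ i = ∏ i ∈ range n, (y + a ^ q ^ i) := by
  rw [← prod_pow_eq_pow_sum]
  refine prod_congr rfl fun i _ => ?_
  have hfix : y ^ q ^ i = y := by
    simpa using pow_pow_eq_mul_pow (b := 1) (by rw [hy, mul_one]) (one_pow q) i
  rw [hq, ← pow_mul, add_pow_expChar_pow, pow_mul, ← hq, hfix]

theorem add_pow_geom_sum_eq_pow_orderOf [IsDomain R] (hq : q = p ^ k) {n : ℕ} (hn : 0 < n)
    {y a b : R} (hy : y ^ q = y) (ha : a ^ q = a * b) (hbq : b ^ q = b) (hbn : b ^ n = 1) :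
    (y + a) ^ ∑ i ∈ range n, q ^ i =
      (y ^ orderOf b - (-a) ^ orderOf b) ^ (n / orderOf b) := by
  rw [add_pow_geom_sum_eq_prod hq hy, ← prod_range_sub_pow_mul_eq_pow_orderOf hn hbn]
  refine prod_congr rfl fun i _ => ?_
  rw [pow_pow_eq_mul_pow ha hbq]
  ring

end Frobenius

theorem injOn_mul_comp_pow_of_pow_eq_one {M : Type*} [CommMonoid M] {S : Set M} {t : ℕ}
    (ht : t ≠ 0) (G : M → M) (hG : ∀ y ∈ S, G (y ^ t) ^ t = 1) :
    S.InjOn fun y => y * G (y ^ t) := by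
  intro y₁ h₁ y₂ h₂ h
  have hpow : y₁ ^ t = y₂ ^ t := by
    simpa [mul_pow, hG y₁ h₁, hG y₂ h₂] using congrArg (· ^ t) h
  simp only [hpow] at h
  exact (IsUnit.of_pow_eq_one (hG y₂ h₂) ht).mul_right_cancel h

theorem injective_mul_comp_pow_of_injOn {G₀ : Type*} [CommGroupWithZero G₀] {s : ℕ}
    {S : Set G₀} {h : G₀ → G₀} (hS : ∀ x ≠ 0, x ^ s ∈ S) (hh : ∀ y ∈ S, h y ≠ 0)
    (hinj : S.InjOn fun y => y * h y ^ s) :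
    Function.Injective fun x => x * h (x ^ s) := by
  have hne : ∀ x ≠ 0, x * h (x ^ s) ≠ 0 := fun x hx => mul_ne_zero hx (hh _ (hS x hx))
  intro x₁ x₂ heq
  simp only at heq
  rcases eq_or_ne x₁ 0 with rfl | h₁
  · by_contra h₂
    exact hne x₂ (Ne.symm h₂) (by rw [← heq, zero_mul])
  rcases eq_or_ne x₂ 0 with rfl | h₂
  · exact absurd (heq.trans (zero_mul _)) (hne x₁ h₁)
  have hs : x₁ ^ s = x₂ ^ s :=
    hinj (hS x₁ h₁) (hS x₂ h₂) (by simpa only [mul_pow] using congrArg (· ^ s) heq)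
  rw [hs] at heq
  exact mul_right_cancel₀ (hh _ (hS x₂ h₂)) heq

theorem Nat.dvd_geom_sum_add_one (n : ℕ) : n ∣ ∑ i ∈ range n, (n + 1) ^ i := by
  rw [← ZMod.natCast_eq_zero_iff]
  simp

section Norm

variable {F : Type*} [Field F] {n : ℕ} {a : F}

theorem add_ne_zero_of_pow_eq_one (heven : Even n) (hb : a ^ n ≠ 1) {y : F} (hy : y ^ n = 1) :
    y + a ≠ 0 := fun h => hb <| by rwa [eq_neg_of_add_eq_zero_left h, heven.neg_pow] at hy

theorem injOn_mul_add_pow_geom_sum {p k q : ℕ} [ExpChar F p] (hq : q = p ^ k) (hn : n + 1 = q)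
    (heven : Even n) (hbn : (a ^ n) ^ n = 1) (hb : a ^ n ≠ 1) :
    {y : F | y ^ n = 1}.InjOn fun y => y * (y + a) ^ ∑ i ∈ range n, q ^ i := by
  set b := a ^ n
  set t := orderOf b
  set e := (-a) ^ t
  have hn0 : 0 < n := Nat.pos_of_ne_zero fun h => hb (by simp [b, h])
  have ht : 0 < t := orderOf_pos_iff.2 (isOfFinOrder_iff_pow_eq_one.2 ⟨n, hn0, hbn⟩)
  have htn : t ∣ n := orderOf_dvd_of_pow_eq_one hbn
  have hr : n / t ≠ 0 := (Nat.div_pos (Nat.le_of_dvd hn0 htn) ht).ne'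
  have hfix : ∀ y : F, y ^ n = 1 → y ^ q = y := fun y hy => by rw [← hn, pow_succ, hy, one_mul]
  have haq : a ^ q = a * b := by rw [← hn, pow_succ, mul_comm]
  have hnorm : ∀ y : F, y ^ n = 1 →
      (y + a) ^ ∑ i ∈ range n, q ^ i = (y ^ t - e) ^ (n / t) := fun y hy =>
    add_pow_geom_sum_eq_pow_orderOf hq hn0 (hfix y hy) haq (hfix b hbn) hbn
  have he : e ^ q = e := by
    rw [← pow_mul, mul_comm, pow_mul, (hn ▸ heven.add_one : Odd q).neg_pow, haq, ← neg_mul,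
      mul_pow, pow_orderOf_eq_one, mul_one]
  have hw : ∀ y : F, y ^ n = 1 → (y ^ t - e) ^ n = 1 := by
    intro y hy
    have hw0 : y ^ t - e ≠ 0 := fun h => add_ne_zero_of_pow_eq_one heven hb hy <|
      pow_eq_zero_iff'.1 (by rw [hnorm y hy, h, zero_pow hr]) |>.1
    have hwq : (y ^ t - e) ^ q = y ^ t - e := by
      rw [hq, sub_pow_expChar_pow, ← hq, ← pow_mul, mul_comm, pow_mul, hfix y hy, he]
    rwa [← hn, pow_succ, mul_eq_right₀ hw0] at hwq
  refine (injOn_mul_comp_pow_of_pow_eq_one ht.ne' (fun u => (u - e) ^ (n / t))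
    fun y hy => ?_).congr fun y hy => ?_
  · rw [← pow_mul, Nat.div_mul_cancel htn, hw y hy]
  · simp only [hnorm y hy]

end Norm

theorem cpp_monomial_n_eq_q_sub_one_general (p k : ℕ) (hp : p.Prime) (hodd : Odd p)
    {F : Type*} [Field F] [Fintype F]
    (q n : ℕ) (hq : q = p ^ k) (hn : n = q - 1)
    (hF : Fintype.card F = q ^ n)
    (d : ℕ) (hd : d = (q ^ (q - 1) - 1) / (q - 1) + 1)
    (a : F) (ha1 : (a ^ (q - 1)) ^ n = 1) (ha2 : a ^ (q - 1) ≠ 1) :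
    Function.Bijective (fun x : F => a⁻¹ * x ^ d) ∧
      Function.Bijective (fun x : F => a⁻¹ * x ^ d + x) := by
  rw [← hn] at ha1 ha2 hd
  have hn0 : n ≠ 0 := by rintro rfl; exact ha2 (pow_zero a)
  obtain rfl : q = n + 1 := by omega
  have heven : Even n := hn ▸ Nat.Odd.sub_odd (hq ▸ hodd.pow) odd_one
  have ha0 : a ≠ 0 := by rintro rfl; simp [hn0] at ha1
  have := Fact.mk hp
  have := charP_of_card_eq_prime_pow (p := p) (f := k * n) (by rw [hF, hq, ← pow_mul])
  have hds : d = ∑ i ∈ range n, (n + 1) ^ i + 1 := by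
    rw [hd, Nat.geomSum_eq (by omega) n, Nat.add_sub_cancel]
  have hsn : (∑ i ∈ range n, (n + 1) ^ i) * n + 1 = Fintype.card F := by
    rw [hF]; exact geom_sum_mul_add n n
  obtain ⟨m, hm⟩ := Nat.dvd_geom_sum_add_one n
  set s := ∑ i ∈ range n, (n + 1) ^ i
  have hS : ∀ x : F, x ≠ 0 → x ^ s ∈ {y : F | y ^ n = 1} := fun x hx => by
    rw [Set.mem_ofPred_eq, ← pow_mul, ← FiniteField.pow_card_sub_one_eq_one x hx, ← hsn,
      Nat.add_sub_cancel]
  have hscale := mul_right_injective₀ (inv_ne_zero ha0)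
  refine ⟨Finite.injective_iff_bijective.1 ?_, Finite.injective_iff_bijective.1 ?_⟩
  · have hfun : (fun x : F => a⁻¹ * x ^ d) = (a⁻¹ * ·) ∘ fun x => x * id (x ^ s) := by
      funext x; rw [hds, pow_succ']; rfl
    have hid : {y : F | y ^ n = 1}.InjOn fun y => y * id y ^ s :=
      (Set.injOn_id _).congr fun y (hy : y ^ n = 1) => by
        rw [id, hm, pow_mul, hy, one_pow, mul_one]
    exact hfun ▸ hscale.comp (injective_mul_comp_pow_of_injOn hS
      (fun y hy => by rintro rfl; simp [hn0] at hy) hid)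
  · have hfun : (fun x : F => a⁻¹ * x ^ d + x) = (a⁻¹ * ·) ∘ fun x => x * (x ^ s + a) := by
      funext x; simp only [Function.comp, hds, pow_succ']; field_simp
    exact hfun ▸ hscale.comp (injective_mul_comp_pow_of_injOn hS
      (fun y hy => add_ne_zero_of_pow_eq_one heven ha2 hy)
      (injOn_mul_add_pow_geom_sum hq rfl heven ha1 ha2))

/-- CPP monomials with n = q - 1, d = (q^{q-1}-1)/(q-1)+1 and a^{q-1} ∈ μ_n \ {1}. -/
theorem cpp_monomial_n_eq_q_sub_one (p k : ℕ) (hp : p.Prime) (hodd : Odd p) (hk : 0 < k)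
    {F : Type*} [Field F] [Fintype F]
    (q n : ℕ) (hq : q = p ^ k) (hn : n = q - 1)
    (hF : Fintype.card F = q ^ n)
    (d : ℕ) (hd : d = (q ^ (q - 1) - 1) / (q - 1) + 1)
    (a : F) (ha1 : (a ^ (q - 1)) ^ n = 1) (ha2 : a ^ (q - 1) ≠ 1) :
    Function.Bijective (fun x : F => a⁻¹ * x ^ d) ∧
      Function.Bijective (fun x : F => a⁻¹ * x ^ d + x) :=
  cpp_monomial_n_eq_q_sub_one_general p k hp hodd q n hq hn hF d hd a ha1 ha2
end

section
/- Let q be a prime power, n | q - 1, and a ∈ F_q* such that x^n + a has no root in F_q (equivalently (-a)^((q-1)/n) ≠ 1). Then (ξ + a)^{q-1} = 1 for every (q-1)/n-th root of unity ξ ∈ F_q, and consequently h(x) = x·(x^n + a)^{(q-1)/n} is a permutation polynomial of F_q. -/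
lemma exists_nth_pow (q n : ℕ) {F : Type*} [Field F] [Fintype F]
    (hF : Fintype.card F = q) (hn : 0 < n) (hnd : n ∣ q - 1)
    (ξ : F) (h1 : ξ ^ ((q - 1) / n) = 1) : ∃ y : F, y ^ n = ξ := by
  have hq1 : 0 < q - 1 := by
    have : 1 < q := hF ▸ Fintype.one_lt_card
    omega
  set ℓ := (q - 1) / n with hℓ
  have hℓn : n * ℓ = q - 1 := Nat.mul_div_cancel' hnd
  have hℓpos : 0 < ℓ := Nat.div_pos (Nat.le_of_dvd hq1 hnd) hn
  have hξ0 : ξ ≠ 0 := by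
    intro h
    rw [h, zero_pow hℓpos.ne'] at h1
    exact zero_ne_one h1
  classical
  obtain ⟨g, hg⟩ := IsCyclic.exists_generator (α := Fˣ)
  have hord : orderOf g = q - 1 := by
    rw [orderOf_eq_card_of_forall_mem_zpowers hg, Nat.card_eq_fintype_card, Fintype.card_units, hF]
  set u : Fˣ := Units.mk0 ξ hξ0 with hu
  obtain ⟨k, hk⟩ := mem_powers_iff_mem_zpowers.mpr (hg u)
  simp only [] at hk
  have hu1 : u ^ ℓ = 1 := by
    ext
    push_cast
    exact h1
  have hdvd : q - 1 ∣ k * ℓ := by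
    rw [← hord]
    apply orderOf_dvd_of_pow_eq_one
    rw [pow_mul, hk, hu1]
  have hnk : n ∣ k := by
    rw [← hℓn] at hdvd
    obtain ⟨c, hc⟩ := hdvd
    exact ⟨c, Nat.eq_of_mul_eq_mul_right hℓpos (by rw [hc]; ring)⟩
  obtain ⟨m, rfl⟩ := hnk
  refine ⟨((g ^ m : Fˣ) : F), ?_⟩
  have : (g ^ m) ^ n = u := by rw [← hk, ← pow_mul, mul_comm]
  calc ((g ^ m : Fˣ) : F) ^ n = (((g ^ m) ^ n : Fˣ) : F) := by push_cast; ring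
    _ = ξ := by rw [this]; rfl

/-- If x^n + a has no root in F_q, then (ξ + a)^{q-1} = 1 for all (q-1)/n-th roots of
unity ξ, and x (x^n + a)^{(q-1)/n} is a PP of F_q. -/
theorem pp_no_root (q n : ℕ) {F : Type*} [Field F] [Fintype F]
    (hF : Fintype.card F = q) (hn : 0 < n) (hnd : n ∣ q - 1)
    (a : F) (ha : a ≠ 0) (hroot : ∀ x : F, x ^ n + a ≠ 0) :
    (∀ ξ : F, ξ ^ ((q - 1) / n) = 1 → (ξ + a) ^ (q - 1) = 1) ∧
      Function.Bijective (fun x : F => x * (x ^ n + a) ^ ((q - 1) / n)) := by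
  have hcard : Fintype.card F - 1 = q - 1 := by rw [hF]
  have hpow : ∀ b : F, b ≠ 0 → b ^ (q - 1) = 1 := fun b hb => by
    rw [← hcard]; exact FiniteField.pow_card_sub_one_eq_one b hb
  have hℓn : n * ((q - 1) / n) = q - 1 := Nat.mul_div_cancel' hnd
  constructor
  · intro ξ hξ
    obtain ⟨y, rfl⟩ := exists_nth_pow q n hF hn hnd ξ hξ
    exact hpow _ (hroot y)
  · rw [Fintype.bijective_iff_injective_and_card]
    refine ⟨fun x y hxy => ?_, rfl⟩
    simp only at hxy
    have key : ∀ z : F, (z * (z ^ n + a) ^ ((q - 1) / n)) ^ n = z ^ n := fun z => by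
      rw [mul_pow, ← pow_mul, mul_comm ((q-1)/n) n, hℓn, hpow _ (hroot z), mul_one]
    have hxn : x ^ n = y ^ n := by rw [← key x, ← key y, hxy]
    have : (x ^ n + a) ^ ((q - 1) / n) = (y ^ n + a) ^ ((q - 1) / n) := by rw [hxn]
    rw [this] at hxy
    exact mul_right_cancel₀ (pow_ne_zero _ (hroot y)) hxy
end

section
/- Let q be an odd prime power, b ∈ F_q*, c an element of an extension with c² = b, n + 1 a positive integer, and ζ a primitive 4(n+1)-th root of unity. Then the roots of the Dickson polynomial D_{n+1}(x, b) (of degree n+1) in the algebraic closure are exactly the elements c(ζ^{2i+1} + ζ^{-(2i+1)}) for 0 ≤ i ≤ n. -/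
theorem my_dickson_eval {R : Type*} [CommRing R] (b x y : R) (h : x * y = b) :
    ∀ m, (Polynomial.dickson 1 b m).eval (x + y) = x ^ m + y ^ m
  | 0 => by simp [Polynomial.dickson_zero]; norm_num
  | 1 => by simp [Polynomial.dickson_one]
  | m + 2 => by
    rw [Polynomial.dickson_add_two]
    simp only [Polynomial.eval_sub, Polynomial.eval_mul, Polynomial.eval_X, Polynomial.eval_C,
      my_dickson_eval b x y h (m + 1), my_dickson_eval b x y h m]
    rw [← h]; ring

/-- The roots of the Dickson polynomial D_{n+1}(x, b) are exactly
c(ζ^{2i+1} + ζ^{-(2i+1)}) for 0 ≤ i ≤ n. -/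
theorem dickson_roots (p k n : ℕ) [Fact (Nat.Prime p)] (hodd : Odd p) (hk : 0 < k)
    (q : ℕ) (hq : q = p ^ k)
    (b c ζ : AlgebraicClosure (ZMod p))
    (hb : b ^ q = b) (hb0 : b ≠ 0) (hc : c ^ 2 = b)
    (hζ : IsPrimitiveRoot ζ (4 * (n + 1))) :
    ∀ w : AlgebraicClosure (ZMod p),
      (Polynomial.dickson 1 b (n + 1)).eval w = 0 ↔
        ∃ i ≤ n, w = c * (ζ ^ (2 * i + 1) + ζ⁻¹ ^ (2 * i + 1)) := by
  have hc0 : c ≠ 0 := by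
    intro h; apply hb0; rw [← hc, h]; ring
  have hζ0 : ζ ≠ 0 := hζ.ne_zero (by positivity)
  -- ζ^(2(n+1)) = -1
  have hz2 : ζ ^ (2 * (n + 1)) = -1 := by
    have h1 : ζ ^ (2 * (n + 1)) * ζ ^ (2 * (n + 1)) = 1 := by
      rw [← pow_add, show 2 * (n + 1) + 2 * (n + 1) = 4 * (n + 1) by ring, hζ.pow_eq_one]
    rcases mul_self_eq_one_iff.mp h1 with h | h
    · exfalso
      have hdvd := (hζ.pow_eq_one_iff_dvd _).mp h
      have := Nat.le_of_dvd (by positivity) hdvd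
      omega
    · exact h
  -- the key formula for w of the given shape
  have key : ∀ i : ℕ, (Polynomial.dickson 1 b (n + 1)).eval
      (c * (ζ ^ (2 * i + 1) + ζ⁻¹ ^ (2 * i + 1))) = 0 := by
    intro i
    have hzne : ζ ^ (2 * i + 1) ≠ 0 := pow_ne_zero _ hζ0
    have hmul : (c * ζ ^ (2 * i + 1)) * (c * ζ⁻¹ ^ (2 * i + 1)) = b := by
      rw [← hc, inv_pow]
      field_simp
    have heval := my_dickson_eval b (c * ζ ^ (2 * i + 1)) (c * ζ⁻¹ ^ (2 * i + 1)) hmul (n + 1)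
    rw [show c * (ζ ^ (2 * i + 1) + ζ⁻¹ ^ (2 * i + 1)) =
      c * ζ ^ (2 * i + 1) + c * ζ⁻¹ ^ (2 * i + 1) by ring, heval]
    have hx : (ζ ^ (2 * i + 1)) ^ (n + 1) * (ζ ^ (2 * i + 1)) ^ (n + 1) = -1 := by
      rw [← pow_add, ← pow_mul,
        show (2 * i + 1) * ((n + 1) + (n + 1)) = (2 * (n + 1)) * (2 * i + 1) by ring,
        pow_mul, hz2, Odd.neg_one_pow ⟨i, by ring⟩]
    have hinv : ((ζ ^ (2 * i + 1)) ^ (n + 1))⁻¹ = -((ζ ^ (2 * i + 1)) ^ (n + 1)) :=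
      inv_eq_of_mul_eq_one_right (by linear_combination -hx)
    simp only [mul_pow, inv_pow, hinv]
    ring
  intro w
  constructor
  · intro hw
    -- find u with u + b/u = w
    have hp : Nat.Prime p := Fact.out
    have h2 : (2 : AlgebraicClosure (ZMod p)) ≠ 0 := by
      intro h
      have h' : ((2 : ℕ) : AlgebraicClosure (ZMod p)) = 0 := by exact_mod_cast h
      have hdvd := (CharP.cast_eq_zero_iff (AlgebraicClosure (ZMod p)) p 2).mp h'
      have := (Nat.prime_dvd_prime_iff_eq hp Nat.prime_two).mp hdvd
      rw [this] at hodd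
      exact (Nat.not_odd_iff_even.mpr even_two) hodd
    obtain ⟨s, hs⟩ := IsAlgClosed.exists_pow_nat_eq (w ^ 2 - 4 * b) two_pos
    set u : AlgebraicClosure (ZMod p) := (w + s) / 2 with hu
    have huv : u * (w - u) = b := by
      rw [hu]
      field_simp
      linear_combination -hs
    have hu0 : u ≠ 0 := by
      intro h; apply hb0; rw [← huv, h, zero_mul]
    set v : AlgebraicClosure (ZMod p) := w - u with hv
    have huv' : u * v = b := huv
    have hwsum : w = u + v := by rw [hv]; ring
    have heval := my_dickson_eval b u v huv' (n + 1)
    rw [hwsum, heval] at hw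
    have hv0 : v ≠ 0 := by
      intro h; apply hb0; rw [← huv', h, mul_zero]
    have hu2 : u ^ (2 * (n + 1)) = -(c ^ (2 * (n + 1))) := by
      have hb' : u ^ (n + 1) * v ^ (n + 1) = c ^ (2 * (n + 1)) := by
        rw [← mul_pow, huv', ← hc, ← pow_mul]
      linear_combination u ^ (n + 1) * hw - hb'
    set t : AlgebraicClosure (ZMod p) := u / (c * ζ) with ht
    have ht1 : t ^ (2 * (n + 1)) = 1 := by
      rw [ht, div_pow, mul_pow, hu2, hz2, mul_neg_one, neg_div_neg_eq,
        div_self (pow_ne_zero _ hc0)]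
    have hprim2 : IsPrimitiveRoot (ζ ^ 2) (2 * (n + 1)) :=
      hζ.pow (by positivity) (by ring)
    haveI : NeZero (2 * (n + 1)) := ⟨by positivity⟩
    obtain ⟨j, hj, hjt⟩ := hprim2.eq_pow_of_pow_eq_one ht1
    have huval : u = c * ζ ^ (2 * j + 1) := by
      have h1 : u / (c * ζ) = ζ ^ (2 * j) := by rw [← ht, ← hjt, ← pow_mul]
      have h2' := (div_eq_iff (mul_ne_zero hc0 hζ0)).mp h1
      rw [h2', pow_succ]; ring
    have hvval : v = c * ζ⁻¹ ^ (2 * j + 1) := by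
      have hz : ζ ^ (2 * j + 1) ≠ 0 := pow_ne_zero _ hζ0
      have h3 : u * (c * ζ⁻¹ ^ (2 * j + 1)) = b := by
        rw [huval, ← hc, inv_pow]
        field_simp
      exact mul_left_cancel₀ hu0 (huv'.trans h3.symm)
    by_cases hjn : j ≤ n
    · exact ⟨j, hjn, by rw [hwsum, huval, hvval]; ring⟩
    · refine ⟨2 * n + 1 - j, by omega, ?_⟩
      have hexp : (2 * (2 * n + 1 - j) + 1) + (2 * j + 1) = 4 * (n + 1) := by omega
      have hswap : ζ ^ (2 * (2 * n + 1 - j) + 1) = ζ⁻¹ ^ (2 * j + 1) := by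
        rw [inv_pow]
        exact eq_inv_of_mul_eq_one_right (by rw [← pow_add]; exact (hζ.pow_eq_one_iff_dvd _).mpr ⟨1, by omega⟩)
      have hswap2 : ζ⁻¹ ^ (2 * (2 * n + 1 - j) + 1) = ζ ^ (2 * j + 1) := by
        rw [inv_pow, inv_eq_iff_eq_inv]
        exact eq_inv_of_mul_eq_one_right
          (by rw [← pow_add]; exact (hζ.pow_eq_one_iff_dvd _).mpr ⟨1, by omega⟩)
      rw [hwsum, huval, hvval, hswap, hswap2]
      ring
  · rintro ⟨i, _, rfl⟩
    exact key i
end
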